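/- The vector g := 2(w*(c) − w*(2ĉ − c)) is a subgradient of the SPO+ loss at ĉ: for all ĉ′ ∈ ℝ^d, ℓ_SPO+(ĉ′, c) ≥ ℓ_SPO+(ĉ, c) + gᵀ(ĉ′ − ĉ). -/
import Mathlib


open MeasureTheory Set

noncomputable section

/-- Dot product on `Fin d → ℝ`. -/
def dotp {d : ℕ} (c w : Fin d → ℝ) : ℝ := ∑ i, c i * w i

/-- Optimal value `z*(c) = min_{w ∈ S} cᵀw`. -/
def zS {d : ℕ} (S : Set (Fin d → ℝ)) (c : Fin d → ℝ) : ℝ := sInf ((fun w => dotp c w) '' S)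

/-- Support function `ξ_S(c) = max_{w ∈ S} cᵀw`. -/
def xiS {d : ℕ} (S : Set (Fin d → ℝ)) (c : Fin d → ℝ) : ℝ := sSup ((fun w => dotp c w) '' S)

/-- Optimal solution set `W*(c) = argmin_{w ∈ S} cᵀw`. -/
def WS {d : ℕ} (S : Set (Fin d → ℝ)) (c : Fin d → ℝ) : Set (Fin d → ℝ) :=
  {w | w ∈ S ∧ ∀ u ∈ S, dotp c w ≤ dotp c u}

/-- SPO loss `ℓ_SPO(ĉ, c) = max_{w ∈ W*(ĉ)} cᵀw − z*(c)`. -/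
def lSPO {d : ℕ} (S : Set (Fin d → ℝ)) (chat c : Fin d → ℝ) : ℝ :=
  sSup ((fun w => dotp c w) '' WS S chat) - zS S c

/-- SPO+ loss `ℓ_SPO+(ĉ, c) = ξ_S(c − 2ĉ) + 2ĉᵀw*(c) − z*(c)` given a selection `wstar`. -/
def lSPOp {d : ℕ} (S : Set (Fin d → ℝ)) (wstar : (Fin d → ℝ) → (Fin d → ℝ))
    (chat c : Fin d → ℝ) : ℝ :=
  xiS S (c - (2 : ℝ) • chat) + 2 * dotp chat (wstar c) - zS S c

lemma dotp_sub_left {d : ℕ} (a b w : Fin d → ℝ) :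
    dotp (a - b) w = dotp a w - dotp b w := by
  simp [dotp, sub_mul, Finset.sum_sub_distrib]

lemma dotp_smul_left {d : ℕ} (r : ℝ) (a w : Fin d → ℝ) :
    dotp (r • a) w = r * dotp a w := by
  simp [dotp, Finset.mul_sum, mul_assoc]

lemma dotp_comm {d : ℕ} (a w : Fin d → ℝ) : dotp a w = dotp w a := by
  simp [dotp, mul_comm]

lemma dotp_continuous {d : ℕ} (v : Fin d → ℝ) :
    Continuous fun w : Fin d → ℝ => dotp v w := by
  unfold dotp
  exact continuous_finset_sum _ fun i _ =>
    (continuous_const.mul (continuous_apply i))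

/-- `g := 2(w*(c) − w*(2ĉ − c))` is a subgradient of the SPO+ loss at `ĉ`. -/
theorem spo_plus_subgradient {d : ℕ} (S : Set (Fin d → ℝ))
    (hS : S.Nonempty) (hSc : IsCompact S)
    (wstar : (Fin d → ℝ) → (Fin d → ℝ)) (hw : ∀ v, wstar v ∈ WS S v)
    (chat c : Fin d → ℝ) :
    ∀ chat' : Fin d → ℝ,
      lSPOp S wstar chat c +
          dotp ((2 : ℝ) • (wstar c - wstar ((2 : ℝ) • chat - c))) (chat' - chat) ≤
        lSPOp S wstar chat' c := by
  intro chat'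
  set wbar := wstar ((2 : ℝ) • chat - c) with hwbar_def
  obtain ⟨hwbarS, hwbar_min⟩ := hw ((2 : ℝ) • chat - c)
  -- Claim 1: xiS S (c - 2ĉ) = dotp c wbar - 2 * dotp chat wbar
  have hclaim1 : xiS S (c - (2 : ℝ) • chat) = dotp c wbar - 2 * dotp chat wbar := by
    apply IsGreatest.csSup_eq
    constructor
    · exact ⟨wbar, hwbarS, by
        show dotp (c - (2 : ℝ) • chat) wbar = _
        rw [dotp_sub_left, dotp_smul_left]⟩
    · rintro x ⟨w, hwS, rfl⟩
      have h := hwbar_min w hwS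
      rw [dotp_sub_left, dotp_sub_left, dotp_smul_left, dotp_smul_left] at h
      show dotp (c - (2 : ℝ) • chat) w ≤ _
      rw [dotp_sub_left, dotp_smul_left]
      linarith
  -- Claim 2: xiS S (c - 2ĉ') ≥ dotp c wbar - 2 * dotp chat' wbar
  have hbdd : BddAbove ((fun w => dotp (c - (2 : ℝ) • chat') w) '' S) :=
    (hSc.image (dotp_continuous _)).bddAbove
  have hclaim2 : dotp c wbar - 2 * dotp chat' wbar ≤ xiS S (c - (2 : ℝ) • chat') :=
    le_csSup hbdd ⟨wbar, hwbarS, by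
      show dotp (c - (2 : ℝ) • chat') wbar = _
      rw [dotp_sub_left, dotp_smul_left]⟩
  -- Expand the subgradient term
  have hg : dotp ((2 : ℝ) • (wstar c - wbar)) (chat' - chat) =
      2 * (dotp chat' (wstar c) - dotp chat (wstar c)
        - dotp chat' wbar + dotp chat wbar) := by
    rw [dotp_smul_left, dotp_sub_left, dotp_comm (wstar c), dotp_comm wbar,
      dotp_sub_left, dotp_sub_left]
    ring
  unfold lSPOp
  rw [hg, hclaim1]
  linarith
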